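/- arXiv:0803.3750 — 2 statements merged into one kernel-verified Lean document; each statement's English description precedes it below -/
import Mathlib

section
/- Let f : {-1,1}^I → ℝ, and let W, B be disjoint subsets of I. Let Λ_B be the event that B is pivotal for f (there exists ω' agreeing with ω off B with f(ω') ≠ f(ω)), and λ(B,W) = P[Λ_B | F_{W^c}]. Then ∑_{S : S∩B≠∅, S∩W=∅} f̂(S)² ≤ 4·‖f‖_∞²·E[λ(B,W)²]. -/
open Finset

variable {I : Type*} [Fintype I] [DecidableEq I]

/-- Expectation with respect to the uniform probability measure on `{-1,1}^I ≅ (I → Bool)`. -/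
noncomputable def expec (f : (I → Bool) → ℝ) : ℝ :=
  (∑ ω : I → Bool, f ω) / (Fintype.card (I → Bool) : ℝ)

/-- The value `±1` of a bit. -/
noncomputable def sgn (b : Bool) : ℝ := if b then 1 else -1

/-- The Walsh function `χ_S(ω) = ∏_{i ∈ S} ω_i`. -/
noncomputable def chi (S : Finset I) (ω : I → Bool) : ℝ := ∏ i ∈ S, sgn (ω i)

/-- The Fourier coefficient `f̂(S) = E[f ⬝ χ_S]`. -/
noncomputable def fhat (f : (I → Bool) → ℝ) (S : Finset I) : ℝ :=
  expec (fun ω => f ω * chi S ω)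

/-- The conditional expectation `E[g | F_A]` given the coordinates in `A`. -/
noncomputable def condE (g : (I → Bool) → ℝ) (A : Finset I) (ω : I → Bool) : ℝ :=
  expec (fun z => g (fun i => if i ∈ A then ω i else z i))

open Classical in
/-- The indicator of the event `Λ_B` that the set of bits `B` is pivotal for `f`. -/
noncomputable def pivInd (f : (I → Bool) → ℝ) (B : Finset I) (ω : I → Bool) : ℝ :=
  if ∃ ω' : I → Bool, (∀ i ∉ B, ω' i = ω i) ∧ f ω' ≠ f ω then 1 else 0

/-- The sup norm `‖f‖_∞`. -/
noncomputable def supnorm (f : (I → Bool) → ℝ) : ℝ := ⨆ ω : I → Bool, |f ω|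

/-!
Put `g = f - E[f | F_{B^c}]` and `h = E[g | F_{W^c}]`. On the Fourier side, conditioning on
`F_A` keeps exactly the coefficients `f̂(S)` with `S ⊆ A`, so `ĥ(S) = f̂(S)` when `S` meets `B` and
avoids `W`, and `ĥ(S) = 0` otherwise; by Parseval the left-hand side is `E[h²]`. Off `Λ_B` the
function `f` is constant along the bits of `B`, so `g = 0` there, while `|g| ≤ 2‖f‖_∞` everywhere.
Hence `|g| ≤ 2‖f‖_∞ 1_{Λ_B}`, and conditioning on `F_{W^c}` gives `|h| ≤ 2‖f‖_∞ λ(B,W)`.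
-/

lemma card_fun_bool_pos : (0 : ℝ) < Fintype.card (I → Bool) := by
  exact_mod_cast Fintype.card_pos

lemma expec_const (c : ℝ) : expec (fun _ : I → Bool => c) = c := by
  rw [expec, sum_const, card_univ, nsmul_eq_mul, mul_div_cancel_left₀ _ card_fun_bool_pos.ne']

lemma expec_const_mul (c : ℝ) (u : (I → Bool) → ℝ) :
    expec (fun ω => c * u ω) = c * expec u := by
  rw [expec, expec, ← mul_sum, mul_div_assoc]

lemma expec_sub (u v : (I → Bool) → ℝ) :
    expec (fun ω => u ω - v ω) = expec u - expec v := by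
  rw [expec, expec, expec, sum_sub_distrib, sub_div]

lemma expec_sum {κ : Type*} (s : Finset κ) (u : κ → (I → Bool) → ℝ) :
    expec (fun ω => ∑ k ∈ s, u k ω) = ∑ k ∈ s, expec (u k) := by
  simp only [expec, ← sum_div]
  rw [sum_comm]

lemma expec_mono {u v : (I → Bool) → ℝ} (h : ∀ ω, u ω ≤ v ω) : expec u ≤ expec v :=
  div_le_div_of_nonneg_right (sum_le_sum fun ω _ => h ω) card_fun_bool_pos.le

lemma abs_expec_le {u v : (I → Bool) → ℝ} (h : ∀ ω, |u ω| ≤ v ω) : |expec u| ≤ expec v := by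
  rw [expec, abs_div, abs_of_pos card_fun_bool_pos]
  exact div_le_div_of_nonneg_right
    ((abs_sum_le_sum_abs _ _).trans (sum_le_sum fun ω _ => h ω)) card_fun_bool_pos.le

lemma sgn_mul_self (b : Bool) : sgn b * sgn b = 1 := by cases b <;> simp [sgn]

lemma sum_sgn : ∑ b : Bool, sgn b = 0 := by simp [sgn]

lemma chi_eq_prod_univ (S : Finset I) (ω : I → Bool) :
    chi S ω = ∏ i, if i ∈ S then sgn (ω i) else 1 := by
  rw [chi, prod_ite_mem, univ_inter]

lemma chi_mul_chi (S T : Finset I) (ω : I → Bool) :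
    chi S ω * chi T ω = chi (symmDiff S T) ω := by
  rw [chi_eq_prod_univ, chi_eq_prod_univ, chi_eq_prod_univ, ← prod_mul_distrib]
  refine prod_congr rfl fun i _ => ?_
  by_cases hS : i ∈ S <;> by_cases hT : i ∈ T <;> simp [hS, hT, mem_symmDiff, sgn_mul_self]

set_option linter.unusedSectionVars false in
lemma chi_piecewise (S A : Finset I) (ω z : I → Bool) :
    chi S (fun i => if i ∈ A then ω i else z i) = chi (S ∩ A) ω * chi (S \ A) z := by
  rw [chi, chi, chi, ← prod_inter_mul_prod_sdiff S A]
  congr 1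
  · exact prod_congr rfl fun i hi => by rw [if_pos (mem_inter.mp hi).2]
  · exact prod_congr rfl fun i hi => by rw [if_neg (mem_sdiff.mp hi).2]

lemma expec_chi (S : Finset I) : expec (chi S) = if S = ∅ then 1 else 0 := by
  rcases S.eq_empty_or_nonempty with rfl | ⟨i, hi⟩
  · have chi_empty : chi (∅ : Finset I) = fun _ => 1 := funext fun ω => prod_empty
    rw [chi_empty, expec_const, if_pos rfl]
  · have sum_chi : ∑ ω, chi S ω = 0 := by
      simp_rw [chi_eq_prod_univ]
      rw [← Fintype.prod_sum (fun i b => if i ∈ S then sgn b else 1)]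
      exact prod_eq_zero (mem_univ i) (by simp only [hi, if_true, sum_sgn])
    rw [expec, sum_chi, zero_div, if_neg (nonempty_iff_ne_empty.mp ⟨i, hi⟩)]

lemma sum_chi_mul_chi (z w : I → Bool) :
    ∑ S : Finset I, chi S z * chi S w = if z = w then (Fintype.card (I → Bool) : ℝ) else 0 := by
  have expand : ∑ S : Finset I, chi S z * chi S w = ∏ i, (1 + sgn (z i) * sgn (w i)) := by
    rw [prod_one_add, powerset_univ]
    exact sum_congr rfl fun S _ => (prod_mul_distrib ..).symm
  rw [expand]
  split_ifs with hzw
  · subst hzw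
    simp [sgn_mul_self, one_add_one_eq_two]
  · obtain ⟨i, hi⟩ := Function.ne_iff.mp hzw
    refine prod_eq_zero (mem_univ i) ?_
    cases hz : z i <;> cases hw : w i <;> simp_all [sgn]

theorem sum_fhat_mul_chi (g : (I → Bool) → ℝ) (ω : I → Bool) :
    ∑ S : Finset I, fhat g S * chi S ω = g ω := by
  calc ∑ S : Finset I, fhat g S * chi S ω
      = expec (fun z => ∑ S : Finset I, chi S ω * (g z * chi S z)) := by
        rw [expec_sum]
        exact sum_congr rfl fun S _ => by rw [expec_const_mul, fhat, mul_comm]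
    _ = expec (fun z => g z * if z = ω then (Fintype.card (I → Bool) : ℝ) else 0) := by
        congr 1; funext z
        rw [← sum_chi_mul_chi z ω, mul_sum]
        exact sum_congr rfl fun S _ => by ring
    _ = g ω := by simp [expec]

theorem sum_fhat_mul_fhat (g h : (I → Bool) → ℝ) :
    ∑ S : Finset I, fhat g S * fhat h S = expec (fun ω => g ω * h ω) := by
  calc ∑ S : Finset I, fhat g S * fhat h S
      = expec (fun ω => ∑ S : Finset I, fhat g S * (h ω * chi S ω)) := by
        rw [expec_sum]
        exact sum_congr rfl fun S _ => by rw [expec_const_mul]; rfl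
    _ = expec (fun ω => g ω * h ω) := by
        congr 1; funext ω
        rw [← sum_fhat_mul_chi g ω, sum_mul]
        exact sum_congr rfl fun S _ => by ring

lemma fhat_sum_mul_chi (c : Finset I → ℝ) (S : Finset I) :
    fhat (fun ω => ∑ T : Finset I, c T * chi T ω) S = c S := by
  have orthogonality : ∀ T : Finset I,
      expec (fun ω => c T * chi T ω * chi S ω) = if T = S then c T else 0 := fun T => by
    simp_rw [mul_assoc, chi_mul_chi]
    rw [expec_const_mul, expec_chi]
    simp only [← bot_eq_empty, symmDiff_eq_bot, mul_ite, mul_one, mul_zero]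
  simp_rw [fhat, sum_mul]
  rw [expec_sum]
  simp_rw [orthogonality]
  rw [sum_ite_eq' univ S c, if_pos (mem_univ S)]

lemma fhat_sub (u v : (I → Bool) → ℝ) (S : Finset I) :
    fhat (fun ω => u ω - v ω) S = fhat u S - fhat v S := by
  rw [fhat, fhat, fhat, ← expec_sub]
  simp_rw [sub_mul]

lemma condE_eq_sum (g : (I → Bool) → ℝ) (A : Finset I) (ω : I → Bool) :
    condE g A ω = ∑ S : Finset I, (if S ⊆ A then fhat g S else 0) * chi S ω := by
  simp_rw [condE, ← sum_fhat_mul_chi g, chi_piecewise, ← mul_assoc]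
  rw [expec_sum]
  refine sum_congr rfl fun S _ => ?_
  rw [expec_const_mul, expec_chi]
  simp only [sdiff_eq_empty_iff_subset]
  split_ifs with hSA
  · rw [inter_eq_left.mpr hSA, mul_one]
  · rw [zero_mul, mul_zero]

lemma fhat_condE (g : (I → Bool) → ℝ) (A S : Finset I) :
    fhat (condE g A) S = if S ⊆ A then fhat g S else 0 := by
  rw [funext (condE_eq_sum g A), fhat_sum_mul_chi]

lemma condE_const (c : ℝ) (A : Finset I) (ω : I → Bool) :
    condE (fun _ => c) A ω = c :=
  expec_const c

lemma condE_const_mul (c : ℝ) (u : (I → Bool) → ℝ) (A : Finset I) (ω : I → Bool) :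
    condE (fun ω => c * u ω) A ω = c * condE u A ω :=
  expec_const_mul c _

lemma abs_condE_le_condE {g u : (I → Bool) → ℝ} (h : ∀ ω, |g ω| ≤ u ω) (A : Finset I)
    (ω : I → Bool) : |condE g A ω| ≤ condE u A ω :=
  abs_expec_le fun _ => h _

set_option linter.unusedSectionVars false in
lemma abs_le_supnorm (f : (I → Bool) → ℝ) (ω : I → Bool) : |f ω| ≤ supnorm f :=
  le_ciSup (f := fun ω => |f ω|) (Set.finite_range _).bddAbove ω

lemma condE_compl_eq_self_of_not_pivotal {f : (I → Bool) → ℝ} {B : Finset I} {ω : I → Bool}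
    (h : ∀ ω' : I → Bool, (∀ i ∉ B, ω' i = ω i) → f ω' = f ω) :
    condE f (univ \ B) ω = f ω := by
  have fibre_const :
      (fun z : I → Bool => f fun i => if i ∈ univ \ B then ω i else z i) = fun _ => f ω :=
    funext fun z => h _ fun i hi => if_pos (mem_sdiff.mpr ⟨mem_univ i, hi⟩)
  rw [condE, fibre_const, expec_const]

lemma abs_sub_condE_compl_le_pivInd (f : (I → Bool) → ℝ) (B : Finset I) (ω : I → Bool) :
    |f ω - condE f (univ \ B) ω| ≤ 2 * supnorm f * pivInd f B ω := by
  rw [pivInd]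
  split_ifs with hpiv
  · have abs_condE_le : |condE f (univ \ B) ω| ≤ supnorm f := by
      simpa only [condE_const] using abs_condE_le_condE (abs_le_supnorm f) (univ \ B) ω
    linarith [abs_sub (f ω) (condE f (univ \ B) ω), abs_le_supnorm f ω]
  · push Not at hpiv
    rw [condE_compl_eq_self_of_not_pivotal hpiv, sub_self, abs_zero, mul_zero]

lemma fhat_sub_condE_compl (f : (I → Bool) → ℝ) (B S : Finset I) :
    fhat (fun ω => f ω - condE f (univ \ B) ω) S = if (S ∩ B).Nonempty then fhat f S else 0 := by
  simp only [fhat_sub, fhat_condE, ← compl_eq_univ_sdiff, subset_compl_iff_disjoint_right,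
    ← not_disjoint_iff_nonempty_inter]
  split_ifs <;> ring

theorem spectral_pivotal_bound_general (f : (I → Bool) → ℝ) (B W : Finset I) :
    (∑ S : Finset I, if (S ∩ B).Nonempty ∧ S ∩ W = ∅ then fhat f S ^ 2 else 0)
      ≤ 4 * supnorm f ^ 2 *
        expec (fun ω => condE (pivInd f B) ((univ : Finset I) \ W) ω ^ 2) := by
  set lam := condE (pivInd f B) (univ \ W)
  set h := condE (fun ω => f ω - condE f (univ \ B) ω) (univ \ W)
  have fhat_h : ∀ S, fhat h S = if (S ∩ B).Nonempty ∧ S ∩ W = ∅ then fhat f S else 0 := by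
    intro S
    simp only [h, fhat_condE, fhat_sub_condE_compl]
    simp only [← compl_eq_univ_sdiff, subset_compl_iff_disjoint_right, disjoint_iff_inter_eq_empty]
    split_ifs <;> simp_all
  have abs_h : ∀ ω, |h ω| ≤ 2 * supnorm f * lam ω := fun ω => by
    rw [← condE_const_mul]
    exact abs_condE_le_condE (abs_sub_condE_compl_le_pivInd f B) _ ω
  calc (∑ S : Finset I, if (S ∩ B).Nonempty ∧ S ∩ W = ∅ then fhat f S ^ 2 else 0)
      = ∑ S : Finset I, fhat h S * fhat h S :=
        sum_congr rfl fun S _ => by rw [fhat_h]; split_ifs <;> ring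
    _ = expec (fun ω => h ω * h ω) := sum_fhat_mul_fhat h h
    _ ≤ expec (fun ω => 4 * supnorm f ^ 2 * lam ω ^ 2) := expec_mono fun ω => by
        rw [← abs_mul_abs_self]
        exact (mul_self_le_mul_self (abs_nonneg _) (abs_h ω)).trans_eq (by ring)
    _ = 4 * supnorm f ^ 2 * expec (fun ω => lam ω ^ 2) := expec_const_mul _ _

/-- For disjoint `W, B ⊆ I`,
`Q[𝒮 ∩ B ≠ ∅ = 𝒮 ∩ W] ≤ 4 ‖f‖_∞² E[λ(B,W)²]`, where
`λ(B,W) = P[Λ_B | F_{W^c}]`. -/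
theorem spectral_pivotal_bound (f : (I → Bool) → ℝ) (B W : Finset I)
    (hBW : Disjoint B W) :
    (∑ S : Finset I, if (S ∩ B).Nonempty ∧ S ∩ W = ∅ then fhat f S ^ 2 else 0)
      ≤ 4 * supnorm f ^ 2 *
        expec (fun ω => condE (pivInd f B) ((univ : Finset I) \ W) ω ^ 2) :=
  spectral_pivotal_bound_general f B W
end

section
/- In the setting of the large deviation principle above, the averaged inequality E[Y·λ^Y] ≥ a·E[X·λ^{Y+1}] holds for every λ ∈ (0,1), where the inequality P[y_j=1, y_i=0 ∀i∈I] ≥ a·P[x_j=1, y_i=0 ∀i∈I]·1_{j∉I} is multiplied by λ^{n−|I|}(1−λ)^{|I|} and summed over all j ∈ [n] and I ⊆ [n]. -/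
/-!
Write `w_i = λ^{y_i}` and `F_j = ∏_{i ≠ j} w_i`, so that `λ^Y = w_j F_j`. Then
`Y λ^Y = λ ∑_j y_j F_j` and `X λ^{Y+1} ≤ λ ∑_j x_j F_j`. Expanding
`F_j = ∏_{i ≠ j} (λ + (1 - λ) 1[y_i = 0])` over subsets `I ∌ j` turns `E[x_j F_j]` and
`E[y_j F_j]` into sums of `P[x_j = 1, y_I = 0]` and `P[y_j = 1, y_I = 0]` with the same
nonnegative weights `λ^{n-1-|I|} (1 - λ)^{|I|}`, and the hypothesis compares them term by term.
-/

open MeasureTheory Real Finset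

section Combinatorics

variable {ι : Type*} [DecidableEq ι]

theorem prod_ite_eq_sum_powerset {R : Type*} [CommRing R] (s : Finset ι) (v : ι → Bool)
    (l : R) :
    ∏ i ∈ s, (if v i then l else 1) =
      ∑ t ∈ s.powerset, l ^ (#s - #t) * (1 - l) ^ #t *
        (if ∀ i ∈ t, v i = false then 1 else 0) := by
  have split_factor : ∀ i, (if v i then l else 1) = (if v i = false then 1 - l else 0) + l := by
    intro i; cases v i <;> simp
  rw [prod_congr rfl fun i _ => split_factor i, prod_add]
  refine sum_congr rfl fun t ht => ?_
  rw [prod_ite_zero, prod_const, prod_const, card_sdiff_of_subset (mem_powerset.1 ht)]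
  split_ifs <;> ring

theorem sum_mul_prod_eq_sum_mul_prod_erase {R : Type*} [CommSemiring R] (s : Finset ι)
    (c w : ι → R) :
    (∑ j ∈ s, c j) * ∏ i ∈ s, w i = ∑ j ∈ s, c j * w j * ∏ i ∈ s.erase j, w i := by
  rw [sum_mul]
  exact sum_congr rfl fun j hj => by rw [mul_assoc, mul_prod_erase s w hj]

variable [Fintype ι]

theorem sum_ite_mul_prod_ite {R : Type*} [CommSemiring R] (v : ι → Bool) (l : R) :
    (∑ j, if v j then 1 else 0) * ∏ i, (if v i then l else 1) =
      l * ∑ j, (if v j then 1 else 0) * ∏ i ∈ univ.erase j, (if v i then l else 1) := by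
  rw [sum_mul_prod_eq_sum_mul_prod_erase, mul_sum]
  exact sum_congr rfl fun j _ => by cases v j <;> simp

theorem sum_ite_mul_prod_ite_le (u v : ι → Bool) {l : ℝ} (hl0 : 0 ≤ l) (hl1 : l ≤ 1) :
    (∑ j, if u j then (1 : ℝ) else 0) * (l * ∏ i, (if v i then l else 1)) ≤
      l * ∑ j, (if u j then 1 else 0) * ∏ i ∈ univ.erase j, (if v i then l else 1) := by
  rw [mul_left_comm, sum_mul_prod_eq_sum_mul_prod_erase]
  refine mul_le_mul_of_nonneg_left (sum_le_sum fun j _ => ?_) hl0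
  have hprod : 0 ≤ ∏ i ∈ univ.erase j, (if v i then l else 1) :=
    prod_nonneg fun i _ => by split_ifs <;> linarith
  refine mul_le_mul_of_nonneg_right ?_ hprod
  split_ifs <;> linarith

end Combinatorics

theorem rpow_sum_ite_eq_prod_ite {ι : Type*} (s : Finset ι) (v : ι → Bool) {l : ℝ}
    (hl : 0 < l) :
    l ^ (∑ i ∈ s, if v i then (1 : ℝ) else 0) = ∏ i ∈ s, (if v i then l else 1) := by
  rw [rpow_sum_of_pos hl]
  exact prod_congr rfl fun i _ => by split_ifs <;> simp

section Probability

variable {Ω ι : Type*} {b : Ω → Bool} {y : Ω → ι → Bool}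

theorem ite_mul_prod_ite_eq_sum_indicator [DecidableEq ι] (s : Finset ι) (l : ℝ) :
    (fun ω => (if b ω then (1 : ℝ) else 0) * ∏ i ∈ s, (if y ω i then l else 1)) =
      fun ω => ∑ t ∈ s.powerset, l ^ (#s - #t) * (1 - l) ^ #t *
        ({ω | b ω = true} ∩ {ω | ∀ i ∈ t, y ω i = false}).indicator 1 ω := by
  funext ω
  rw [prod_ite_eq_sum_powerset, mul_sum]
  refine sum_congr rfl fun t _ => ?_
  rw [Set.inter_indicator_one, mul_left_comm]
  simp [Set.indicator_apply]

variable [MeasurableSpace Ω]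

theorem measurableSet_forall_mem_eq_false (hy : ∀ i, MeasurableSet {ω | y ω i = true})
    (t : Finset ι) : MeasurableSet {ω | ∀ i ∈ t, y ω i = false} := by
  have hset : {ω | ∀ i ∈ t, y ω i = false} = ⋂ i ∈ t, {ω | y ω i = true}ᶜ := by ext; simp
  exact hset ▸ t.measurableSet_biInter fun i _ => (hy i).compl

variable [DecidableEq ι] {μ : Measure Ω} [IsFiniteMeasure μ]

theorem integrable_ite_mul_prod_ite (hb : MeasurableSet {ω | b ω = true})
    (hy : ∀ i, MeasurableSet {ω | y ω i = true}) (s : Finset ι) (l : ℝ) :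
    Integrable (fun ω => (if b ω then (1 : ℝ) else 0) * ∏ i ∈ s, (if y ω i then l else 1)) μ := by
  rw [ite_mul_prod_ite_eq_sum_indicator]
  exact integrable_finsetSum _ fun t _ => ((integrable_const 1).indicator
    (hb.inter (measurableSet_forall_mem_eq_false hy t))).const_mul _

theorem integral_ite_mul_prod_ite (hb : MeasurableSet {ω | b ω = true})
    (hy : ∀ i, MeasurableSet {ω | y ω i = true}) (s : Finset ι) (l : ℝ) :
    ∫ ω, (if b ω then (1 : ℝ) else 0) * ∏ i ∈ s, (if y ω i then l else 1) ∂μ =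
      ∑ t ∈ s.powerset, l ^ (#s - #t) * (1 - l) ^ #t *
        μ.real ({ω | b ω = true} ∩ {ω | ∀ i ∈ t, y ω i = false}) := by
  have hS t := hb.inter (measurableSet_forall_mem_eq_false hy t)
  rw [ite_mul_prod_ite_eq_sum_indicator, integral_finsetSum _ fun t _ =>
    ((integrable_const 1).indicator (hS t)).const_mul _]
  exact sum_congr rfl fun t _ => by rw [integral_const_mul, integral_indicator_one (hS t)]

theorem mul_integral_ite_mul_prod_ite_le {c : Ω → Bool} (hb : MeasurableSet {ω | b ω = true})
    (hc : MeasurableSet {ω | c ω = true}) (hy : ∀ i, MeasurableSet {ω | y ω i = true})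
    (s : Finset ι) {a l : ℝ} (hl0 : 0 ≤ l) (hl1 : l ≤ 1)
    (hbc : ∀ t ⊆ s, a * μ.real ({ω | b ω = true} ∩ {ω | ∀ i ∈ t, y ω i = false}) ≤
      μ.real ({ω | c ω = true} ∩ {ω | ∀ i ∈ t, y ω i = false})) :
    a * ∫ ω, (if b ω then (1 : ℝ) else 0) * ∏ i ∈ s, (if y ω i then l else 1) ∂μ ≤
      ∫ ω, (if c ω then (1 : ℝ) else 0) * ∏ i ∈ s, (if y ω i then l else 1) ∂μ := by
  rw [integral_ite_mul_prod_ite hb hy, integral_ite_mul_prod_ite hc hy, mul_sum]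
  refine sum_le_sum fun t ht => ?_
  rw [mul_left_comm]
  exact mul_le_mul_of_nonneg_left (hbc t (mem_powerset.1 ht))
    (mul_nonneg (pow_nonneg hl0 _) (pow_nonneg (sub_nonneg.2 hl1) _))

end Probability

theorem averaged_inequality_general {Ω : Type*} [MeasurableSpace Ω]
    (μ : Measure Ω) [IsProbabilityMeasure μ]
    (n : ℕ) (x y : Ω → Fin n → Bool)
    (hxm : ∀ i, MeasurableSet {ω | x ω i = true})
    (hym : ∀ i, MeasurableSet {ω | y ω i = true})
    (a : ℝ) (ha0 : 0 < a)
    (hcond : ∀ (j : Fin n) (I : Finset (Fin n)), j ∉ I →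
      a * (μ ({ω | x ω j = true} ∩ {ω | ∀ i ∈ I, y ω i = false})).toReal ≤
        (μ ({ω | y ω j = true} ∩ {ω | ∀ i ∈ I, y ω i = false})).toReal)
    (X Y : Ω → ℝ)
    (hX : ∀ ω, X ω = ∑ i : Fin n, (if x ω i then (1 : ℝ) else 0))
    (hY : ∀ ω, Y ω = ∑ i : Fin n, (if y ω i then (1 : ℝ) else 0))
    (l : ℝ) (hl0 : 0 < l) (hl1 : l < 1) :
    a * ∫ ω, X ω * l ^ (Y ω + 1) ∂μ ≤ ∫ ω, Y ω * l ^ (Y ω) ∂μ := by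
  set F : Fin n → Ω → ℝ := fun j ω => ∏ i ∈ univ.erase j, (if y ω i then l else 1)
  have hlY : ∀ ω, l ^ Y ω = ∏ i, (if y ω i then l else 1) := fun ω => by
    rw [hY, rpow_sum_ite_eq_prod_ite _ _ hl0]
  have hYpt : ∀ ω, Y ω * l ^ Y ω = l * ∑ j, (if y ω j then 1 else 0) * F j ω := fun ω => by
    rw [hlY, hY, sum_ite_mul_prod_ite]
  have hXpt : ∀ ω, X ω * l ^ (Y ω + 1) ≤ l * ∑ j, (if x ω j then 1 else 0) * F j ω := fun ω => by
    rw [rpow_add_one hl0.ne', hlY, mul_comm _ l, hX]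
    exact sum_ite_mul_prod_ite_le _ _ hl0.le hl1.le
  have hF : ∀ b : Ω → Fin n → Bool, (∀ i, MeasurableSet {ω | b ω i = true}) →
      ∀ j, Integrable (fun ω => (if b ω j then (1 : ℝ) else 0) * F j ω) μ :=
    fun b hb j => integrable_ite_mul_prod_ite (hb j) hym _ l
  have hX0 : ∀ ω, 0 ≤ X ω * l ^ (Y ω + 1) := fun ω => by
    rw [hX]; exact mul_nonneg (sum_nonneg fun i _ => by positivity) (by positivity)
  calc a * ∫ ω, X ω * l ^ (Y ω + 1) ∂μ
      ≤ a * ∫ ω, l * ∑ j, (if x ω j then 1 else 0) * F j ω ∂μ := by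
        refine mul_le_mul_of_nonneg_left (integral_mono_of_nonneg (.of_forall hX0)
          ((integrable_finsetSum _ fun j _ => hF x hxm j).const_mul l) (.of_forall hXpt)) ha0.le
    _ = l * ∑ j, a * ∫ ω, (if x ω j then 1 else 0) * F j ω ∂μ := by
        rw [integral_const_mul, integral_finsetSum _ fun j _ => hF x hxm j, ← mul_sum]
        ring
    _ ≤ l * ∑ j, ∫ ω, (if y ω j then 1 else 0) * F j ω ∂μ := by
        refine mul_le_mul_of_nonneg_left (sum_le_sum fun j _ => ?_) hl0.le
        exact mul_integral_ite_mul_prod_ite_le (hxm j) (hym j) hym _ hl0.le hl1.le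
          fun I hI => hcond j I fun hj => notMem_erase j _ (hI hj)
    _ = ∫ ω, Y ω * l ^ Y ω ∂μ := by
        simp_rw [hYpt]
        rw [integral_const_mul, integral_finsetSum _ fun j _ => hF y hym j]

/-- **Averaged inequality in the large deviation principle:** under the
hypotheses `y_i ≤ x_i` a.s. and
`P[y_j = 1, y_i = 0 ∀ i ∈ I] ≥ a ⬝ P[x_j = 1, y_i = 0 ∀ i ∈ I]` for `j ∉ I`,
one has `E[Y λ^Y] ≥ a E[X λ^{Y+1}]` for every `λ ∈ (0,1)`. -/
theorem averaged_inequality {Ω : Type*} [MeasurableSpace Ω]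
    (μ : Measure Ω) [IsProbabilityMeasure μ]
    (n : ℕ) (x y : Ω → Fin n → Bool)
    (hxm : ∀ i, MeasurableSet {ω | x ω i = true})
    (hym : ∀ i, MeasurableSet {ω | y ω i = true})
    (hyx : ∀ᵐ ω ∂μ, ∀ i, y ω i ≤ x ω i)
    (a : ℝ) (ha0 : 0 < a) (ha1 : a ≤ 1)
    (hcond : ∀ (j : Fin n) (I : Finset (Fin n)), j ∉ I →
      a * (μ ({ω | x ω j = true} ∩ {ω | ∀ i ∈ I, y ω i = false})).toReal ≤
        (μ ({ω | y ω j = true} ∩ {ω | ∀ i ∈ I, y ω i = false})).toReal)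
    (X Y : Ω → ℝ)
    (hX : ∀ ω, X ω = ∑ i : Fin n, (if x ω i then (1 : ℝ) else 0))
    (hY : ∀ ω, Y ω = ∑ i : Fin n, (if y ω i then (1 : ℝ) else 0))
    (l : ℝ) (hl0 : 0 < l) (hl1 : l < 1) :
    a * ∫ ω, X ω * l ^ (Y ω + 1) ∂μ ≤ ∫ ω, Y ω * l ^ (Y ω) ∂μ :=
  averaged_inequality_general μ n x y hxm hym a ha0 hcond X Y hX hY l hl0 hl1
end
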